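/- Fix τ > 0 and θ ≥ 0, and for t > τ define π̂_t = (1/n_t) Σ_{k=0}^{n_t−1} δ_{max((kτ−θ)/t,0)} with n_t = ⌊t/τ⌋. Then for every ε ∈ (0,1), limsup_{t→∞} ∫₀¹∫₀¹ min(t^ε, |s₁−s₂|^{−ε}) π̂_t(ds₁) π̂_t(ds₂) < ∞. -/
import Mathlib


open MeasureTheory Filter
open scoped ENNReal

/-- The discrete delayed-sampling weight measure
`π̂_t = (1/n_t) Σ_{k<n_t} δ_{max((kτ−θ)/t, 0)}` with `n_t = ⌊t/τ⌋`. -/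
noncomputable def discreteWeight (τ θ t : ℝ) : Measure ℝ :=
  ((⌊t / τ⌋₊ : ℝ≥0∞))⁻¹ •
    ∑ k ∈ Finset.range ⌊t / τ⌋₊, Measure.dirac (max ((k * τ - θ) / t) 0)

/-- Any real-valued function is integrable with respect to a Dirac measure. -/
lemma integrable_dirac_aux {α : Type*} [MeasurableSpace α] [MeasurableSingletonClass α]
    (g : α → ℝ) (a : α) : Integrable g (Measure.dirac a) := by
  refine (integrable_const (g a)).congr ?_
  rw [Filter.EventuallyEq, MeasureTheory.ae_dirac_eq]
  exact Filter.eventually_pure.2 rfl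

/-- Integral against a normalized finite sum of Dirac measures. -/
lemma integral_discrete_aux {n : ℕ} (s : ℕ → ℝ) (g : ℝ → ℝ) :
    ∫ x, g x ∂(((n : ℝ≥0∞))⁻¹ • ∑ k ∈ Finset.range n, Measure.dirac (s k))
      = (n : ℝ)⁻¹ * ∑ k ∈ Finset.range n, g (s k) := by
  rw [integral_smul_measure,
    integral_finset_sum_measure (fun i _ => integrable_dirac_aux g (s i))]
  simp [integral_dirac, ENNReal.toReal_inv, smul_eq_mul]

/-- Comparison of the sum `∑ (d+1)^(-ε)` with an integral. -/
lemma sum_rpow_aux (ε : ℝ) (hε : 0 < ε) (hε' : ε < 1) (n : ℕ) :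
    ∑ d ∈ Finset.range n, ((d : ℝ) + 1) ^ (-ε) ≤ 1 + (n : ℝ) ^ (1 - ε) / (1 - ε) := by
  have h1ε : (0:ℝ) < 1 - ε := by linarith
  cases n with
  | zero => simp; positivity
  | succ m =>
    rw [Finset.sum_range_succ']
    have hanti : AntitoneOn (fun x : ℝ => x ^ (-ε)) (Set.Icc 1 (1 + m)) := by
      intro x hx y hy hxy
      exact Real.rpow_le_rpow_of_nonpos (lt_of_lt_of_le zero_lt_one hx.1) hxy (by linarith)
    have hsum := hanti.sum_le_integral
    have hint : ∫ x in (1:ℝ)..(1 + m), x ^ (-ε)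
        = ((1 + (m:ℝ)) ^ (-ε + 1) - 1) / (-ε + 1) := by
      rw [integral_rpow (Or.inl (by linarith))]
      simp [Real.one_rpow]
    have hstep : ∑ i ∈ Finset.range m, (((i:ℝ) + 1) + 1) ^ (-ε)
        ≤ ((1 + (m:ℝ)) ^ (-ε + 1) - 1) / (-ε + 1) := by
      rw [← hint]
      refine le_trans (le_of_eq ?_) hsum
      refine Finset.sum_congr rfl fun i _ => ?_
      push_cast
      ring_nf
    have hcast : ∑ i ∈ Finset.range m, (((i:ℕ)+1:ℝ) + 1) ^ (-ε)
        = ∑ i ∈ Finset.range m, (((i:ℝ) + 1) + 1) ^ (-ε) := by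
      refine Finset.sum_congr rfl fun i _ => by push_cast; ring_nf
    have h0 : (((0:ℕ):ℝ) + 1) ^ (-ε) = 1 := by norm_num
    have hm : ((m:ℕ)+1 : ℝ) = ((m+1 : ℕ) : ℝ) := by push_cast; ring
    calc ∑ i ∈ Finset.range m, (((i+1:ℕ):ℝ) + 1) ^ (-ε) + (((0:ℕ):ℝ) + 1) ^ (-ε)
        ≤ ((1 + (m:ℝ)) ^ (-ε + 1) - 1) / (-ε + 1) + 1 := by
          rw [h0]
          refine add_le_add ?_ le_rfl
          refine le_trans (le_of_eq ?_) hstep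
          refine Finset.sum_congr rfl fun i _ => by push_cast; ring_nf
      _ ≤ 1 + ((m+1:ℕ) : ℝ) ^ (1 - ε) / (1 - ε) := by
          have : (1 + (m:ℝ)) = ((m+1:ℕ):ℝ) := by push_cast; ring
          rw [this]
          have hpow : (0:ℝ) ≤ ((m+1:ℕ):ℝ) ^ (-ε + 1) := Real.rpow_nonneg (by positivity) _
          have heq : (-ε + 1) = (1 - ε) := by ring
          rw [heq]
          have hnum : ((m+1:ℕ):ℝ) ^ (1-ε) - 1 ≤ ((m+1:ℕ):ℝ) ^ (1-ε) :=
            sub_le_self _ zero_le_one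
          have : (((m+1:ℕ):ℝ) ^ (1-ε) - 1) / (1-ε) ≤ ((m+1:ℕ):ℝ) ^ (1-ε) / (1-ε) := by
            gcongr
          linarith

set_option maxHeartbeats 1000000 in
/-- Example 2.4, second `Π₂(ε)` condition: for the discrete delayed-sampling weight family,
`limsup_{t→∞} ∫₀¹∫₀¹ min(t^ε, |s₁−s₂|^{−ε}) π̂_t(ds₁)π̂_t(ds₂) < ∞` for every `ε ∈ (0,1)`. -/
theorem stmt_11 (τ θ : ℝ) (hτ : 0 < τ) (hθ : 0 ≤ θ) (ε : ℝ) (hε : 0 < ε) (hε' : ε < 1) :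
    IsBoundedUnder (· ≤ ·) atTop
      (fun t => ∫ p, min (t ^ ε) (|p.1 - p.2| ^ (-ε))
        ∂((discreteWeight τ θ t).prod (discreteWeight τ θ t))) := by
  set M : ℕ := ⌊θ / τ⌋₊ + 1 with hM
  refine ⟨4*(M:ℝ)*τ + 4 + 4/(1-ε), ?_⟩
  rw [Filter.eventually_map]
  have h1ε : (0:ℝ) < 1 - ε := by linarith
  filter_upwards [eventually_ge_atTop (max (2*τ) 1)] with t ht
  have ht1 : (1:ℝ) ≤ t := le_trans (le_max_right _ _) ht
  have ht2 : 2*τ ≤ t := le_trans (le_max_left _ _) ht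
  have ht0 : (0:ℝ) < t := by linarith
  set n : ℕ := ⌊t / τ⌋₊ with hn
  set s : ℕ → ℝ := fun k => max (((k:ℝ) * τ - θ) / t) 0 with hs
  have htτ2 : (2:ℝ) ≤ t / τ := (le_div_iff₀ hτ).2 (by linarith)
  have hn2 : 2 ≤ n := Nat.le_floor (by exact_mod_cast htτ2)
  have hn0 : n ≠ 0 := by omega
  have hNpos : (0:ℝ) < n := by exact_mod_cast Nat.pos_of_ne_zero hn0
  have hn_le : (n:ℝ) ≤ t/τ := Nat.floor_le (by positivity)
  have hhalf : t/(2*τ) = (t/τ)/2 := by ring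
  have hn_low : t/(2*τ) ≤ (n:ℝ) := by
    have h1 := Nat.sub_one_lt_floor (t/τ)
    rw [hhalf]
    rw [← hn] at h1
    have : (1:ℝ) ≤ (t/τ)/2 := by linarith
    linarith
  have hνn : t/τ ≤ 2*(n:ℝ) := by
    rw [hhalf] at hn_low; linarith
  -- Probability measure
  set μ : Measure ℝ := discreteWeight τ θ t with hμ
  have hμdef : μ = ((n : ℝ≥0∞))⁻¹ • ∑ k ∈ Finset.range n, Measure.dirac (s k) := rfl
  have hμuniv : μ Set.univ = 1 := by
    rw [hμdef, Measure.smul_apply, Measure.finset_sum_apply]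
    simp only [MeasureTheory.measure_univ, Finset.sum_const, Finset.card_range,
      nsmul_eq_mul, mul_one, smul_eq_mul]
    exact ENNReal.inv_mul_cancel (by exact_mod_cast hn0) (ENNReal.natCast_ne_top n)
  haveI : IsProbabilityMeasure μ := ⟨hμuniv⟩
  -- The integrand
  set f : ℝ × ℝ → ℝ := fun p => min (t ^ ε) (|p.1 - p.2| ^ (-ε)) with hf
  have htε : (0:ℝ) ≤ t ^ ε := Real.rpow_nonneg ht0.le ε
  have hf_nonneg : ∀ p, 0 ≤ f p := fun p =>
    le_min htε (Real.rpow_nonneg (abs_nonneg _) _)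
  have hf_le : ∀ p, f p ≤ t ^ ε := fun p => min_le_left _ _
  have hg : Measurable (fun x : ℝ => |x| ^ (-ε)) := by
    have hrepr : (fun x : ℝ => |x| ^ (-ε))
        = fun x => if x = 0 then 0 else Real.exp (Real.log |x| * (-ε)) := by
      funext x
      by_cases hx : x = 0
      · simp [hx, Real.zero_rpow (show -ε ≠ 0 by intro h; simp at h; linarith)]
      · rw [if_neg hx, Real.rpow_def_of_pos (abs_pos.2 hx)]
    rw [hrepr]
    exact Measurable.ite measurableSet_eq measurable_const
      (Real.measurable_exp.comp ((Real.measurable_log.comp measurable_abs).mul measurable_const))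
  have hfm : Measurable f := by
    apply Measurable.min measurable_const
    exact hg.comp (measurable_fst.sub measurable_snd)
  have hInt : Integrable f (μ.prod μ) := by
    refine Integrable.mono' (integrable_const (t ^ ε)) hfm.aestronglyMeasurable
      (Filter.Eventually.of_forall fun p => ?_)
    rw [Real.norm_eq_abs, abs_of_nonneg (hf_nonneg p)]
    exact hf_le p
  -- Evaluate integral
  have heval : ∫ p, f p ∂(μ.prod μ)
      = (n:ℝ)⁻¹ * ((n:ℝ)⁻¹ * ∑ j ∈ Finset.range n, ∑ k ∈ Finset.range n, f (s j, s k)) := by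
    rw [MeasureTheory.integral_prod f hInt]
    have hinner : ∀ x : ℝ, ∫ y, f (x, y) ∂μ = (n:ℝ)⁻¹ * ∑ k ∈ Finset.range n, f (x, s k) := by
      intro x
      rw [hμdef]
      exact integral_discrete_aux s (fun y => f (x, y))
    simp only [hinner]
    rw [hμdef, integral_discrete_aux s (fun x => (n:ℝ)⁻¹ * ∑ k ∈ Finset.range n, f (x, s k))]
    rw [← Finset.mul_sum]
  -- Pointwise bound on the summands
  set e : ℕ → ℝ := fun j => if (j:ℝ) * τ ≤ θ then t ^ ε else 0 with he
  set F : ℕ → ℕ → ℝ := fun j k =>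
    if j = k then 0 else (t/τ) ^ ε * ((max j k - min j k : ℕ) : ℝ) ^ (-ε) with hF
  have he0 : ∀ j, 0 ≤ e j := by
    intro j; rw [he]; dsimp only; split <;> [exact htε; exact le_rfl]
  have htτpos : (0:ℝ) < t/τ := by positivity
  have hF0 : ∀ j k, 0 ≤ F j k := by
    intro j k; rw [hF]; dsimp only; split
    · exact le_rfl
    · exact mul_nonneg (Real.rpow_nonneg htτpos.le _) (Real.rpow_nonneg (by positivity) _)
  have key : ∀ j k : ℕ, f (s j, s k) ≤ (e j + e k) + F j k := by
    intro j k
    have hEF0 : 0 ≤ (e j + e k) + F j k := by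
      have := he0 j; have := he0 k; have := hF0 j k; linarith
    by_cases hjk : j = k
    · subst hjk
      have : f (s j, s j) = 0 := by
        rw [hf]; dsimp only
        rw [sub_self, abs_zero, Real.zero_rpow (by linarith : -ε ≠ 0)]
        exact min_eq_right htε
      rw [this]; exact hEF0
    · by_cases hjθ : (j:ℝ) * τ ≤ θ
      · have hej : e j = t ^ ε := if_pos hjθ
        have : f (s j, s k) ≤ e j := by rw [hej]; exact hf_le _
        have := he0 k; have := hF0 j k; linarith
      · by_cases hkθ : (k:ℝ) * τ ≤ θ
        · have hek : e k = t ^ ε := if_pos hkθ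
          have : f (s j, s k) ≤ e k := by rw [hek]; exact hf_le _
          have := he0 j; have := hF0 j k; linarith
        · -- both positive
          have hsj : s j = ((j:ℝ) * τ - θ) / t :=
            max_eq_left (div_nonneg (by linarith [not_le.1 hjθ]) ht0.le)
          have hsk : s k = ((k:ℝ) * τ - θ) / t :=
            max_eq_left (div_nonneg (by linarith [not_le.1 hkθ]) ht0.le)
          set d : ℕ := max j k - min j k with hd
          have hd1 : 1 ≤ d := by rw [hd]; rcases Nat.lt_or_ge j k with h | h <;> omega
          have hdR : (1:ℝ) ≤ (d:ℝ) := by exact_mod_cast hd1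
          have hdpos : (0:ℝ) < d := by linarith
          have hcast : |(j:ℝ) - (k:ℝ)| = (d:ℝ) := by
            rcases le_total j k with h | h
            · rw [hd, max_eq_right h, min_eq_left h, Nat.cast_sub h, abs_sub_comm,
                abs_of_nonneg (by simp [Nat.cast_le.2 h, sub_nonneg])]
            · rw [hd, max_eq_left h, min_eq_right h, Nat.cast_sub h,
                abs_of_nonneg (by simp [Nat.cast_le.2 h, sub_nonneg])]
          have habs : |s j - s k| = (d:ℝ) * τ / t := by
            rw [hsj, hsk, div_sub_div_same]
            have : (j:ℝ) * τ - θ - ((k:ℝ) * τ - θ) = ((j:ℝ) - k) * τ := by ring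
            rw [this, abs_div, abs_of_pos ht0, abs_mul, abs_of_pos hτ, hcast]
          have hrw : ((d:ℝ) * τ / t) ^ (-ε) = (t/τ) ^ ε * (d:ℝ) ^ (-ε) := by
            rw [Real.rpow_neg (by positivity), Real.rpow_neg (by positivity),
              Real.div_rpow (by positivity) ht0.le,
              Real.mul_rpow (by positivity) hτ.le,
              Real.div_rpow ht0.le hτ.le]
            have h1 : (0:ℝ) < (d:ℝ) ^ ε := Real.rpow_pos_of_pos hdpos ε
            have h2 : (0:ℝ) < τ ^ ε := Real.rpow_pos_of_pos hτ ε
            have h3 : (0:ℝ) < t ^ ε := Real.rpow_pos_of_pos ht0 ε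
            field_simp
          have hFjk : F j k = (t/τ) ^ ε * (d:ℝ) ^ (-ε) := by
            rw [hF]; dsimp only; rw [if_neg hjk]
          have : f (s j, s k) ≤ F j k := by
            rw [hf]; dsimp only
            rw [habs, hrw, hFjk]
            exact min_le_right _ _
          have := he0 j; have := he0 k; linarith
    -- end key
  -- Sum bounds
  have he_sum : ∑ j ∈ Finset.range n, e j ≤ (M:ℝ) * t ^ ε := by
    have hstep : ∀ j ∈ Finset.range n, e j ≤ if j < M then t ^ ε else 0 := by
      intro j _
      rw [he]; dsimp only
      by_cases hj : (j:ℝ) * τ ≤ θ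
      · rw [if_pos hj, if_pos]
        have : (j:ℝ) ≤ θ / τ := (le_div_iff₀ hτ).2 hj
        have : j ≤ ⌊θ / τ⌋₊ := Nat.le_floor this
        omega
      · rw [if_neg hj]; split <;> [exact htε; exact le_rfl]
    calc ∑ j ∈ Finset.range n, e j ≤ ∑ j ∈ Finset.range n, (if j < M then t ^ ε else 0) :=
          Finset.sum_le_sum hstep
      _ = ∑ j ∈ (Finset.range n).filter (· < M), t ^ ε := (Finset.sum_filter _ _).symm
      _ = ((Finset.range n).filter (· < M)).card * t ^ ε := by
          rw [Finset.sum_const, nsmul_eq_mul]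
      _ ≤ (M:ℝ) * t ^ ε := by
          have hcard : ((Finset.range n).filter (· < M)).card ≤ M := by
            refine le_trans (Finset.card_le_card fun x hx => Finset.mem_range.2 ?_)
              (le_of_eq (Finset.card_range M))
            exact (Finset.mem_filter.1 hx).2
          exact mul_le_mul_of_nonneg_right (by exact_mod_cast hcard) htε
  set A : ℕ → ℕ → ℝ := fun j k => if j < k then ((k - j : ℕ):ℝ) ^ (-ε) else 0 with hA
  have hA0 : ∀ j k, 0 ≤ A j k := by
    intro j k; rw [hA]; dsimp only; split <;> [exact Real.rpow_nonneg (by positivity) _; exact le_rfl]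
  have hFA : ∀ j k, F j k ≤ (t/τ) ^ ε * (A j k + A k j) := by
    intro j k
    rcases lt_trichotomy j k with h | h | h
    · rw [hF, hA]; dsimp only
      rw [if_neg h.ne, max_eq_right h.le, min_eq_left h.le, if_pos h, if_neg (not_lt.2 h.le)]
      rw [add_zero]
    · subst h
      rw [hF]; dsimp only; rw [if_pos rfl]
      exact mul_nonneg (Real.rpow_nonneg htτpos.le _) (by
        have := hA0 j j; linarith [hA0 j j])
    · rw [hF, hA]; dsimp only
      rw [if_neg h.ne', max_eq_left h.le, min_eq_right h.le, if_neg (not_lt.2 h.le), if_pos h]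
      rw [zero_add]
  set T : ℝ := ∑ i ∈ Finset.range n, ((i:ℝ) + 1) ^ (-ε) with hT
  have hT0 : 0 ≤ T := Finset.sum_nonneg fun i _ => Real.rpow_nonneg (by positivity) _
  have hAsum : ∑ j ∈ Finset.range n, ∑ k ∈ Finset.range n, A j k ≤ (n:ℝ) * T := by
    rw [Finset.sum_comm]
    have hrow : ∀ k ∈ Finset.range n, ∑ j ∈ Finset.range n, A j k ≤ T := by
      intro k hk
      have hkn : k ≤ n := le_of_lt (Finset.mem_range.1 hk)
      have hfilter : (Finset.range n).filter (fun j => j < k) = Finset.range k := by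
        ext a
        simp only [Finset.mem_filter, Finset.mem_range]
        omega
      have h1 : ∑ j ∈ Finset.range n, A j k = ∑ j ∈ Finset.range k, ((k - j : ℕ):ℝ) ^ (-ε) := by
        rw [hA]; dsimp only
        rw [← Finset.sum_filter, hfilter]
      have h2 : ∑ j ∈ Finset.range k, ((k - j : ℕ):ℝ) ^ (-ε)
          = ∑ i ∈ Finset.range k, ((i + 1 : ℕ):ℝ) ^ (-ε) := by
        rw [← Finset.sum_range_reflect (fun i => ((i + 1 : ℕ):ℝ) ^ (-ε)) k]
        refine Finset.sum_congr rfl fun j hj => ?_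
        have hjk : j < k := Finset.mem_range.1 hj
        congr 2
        omega
      rw [h1, h2]
      calc ∑ i ∈ Finset.range k, ((i + 1 : ℕ):ℝ) ^ (-ε)
          ≤ ∑ i ∈ Finset.range n, ((i + 1 : ℕ):ℝ) ^ (-ε) :=
            Finset.sum_le_sum_of_subset_of_nonneg (Finset.range_subset_range.2 hkn)
              (fun i _ _ => Real.rpow_nonneg (by positivity) _)
        _ = T := by rw [hT]; refine Finset.sum_congr rfl fun i _ => by push_cast; ring_nf
    calc ∑ k ∈ Finset.range n, ∑ j ∈ Finset.range n, A j k
        ≤ ∑ k ∈ Finset.range n, T := Finset.sum_le_sum hrow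
      _ = (n:ℝ) * T := by rw [Finset.sum_const, Finset.card_range, nsmul_eq_mul]
  have hFsum : ∑ j ∈ Finset.range n, ∑ k ∈ Finset.range n, F j k
      ≤ (t/τ) ^ ε * (2 * ((n:ℝ) * T)) := by
    have h1 : ∑ j ∈ Finset.range n, ∑ k ∈ Finset.range n, F j k
        ≤ ∑ j ∈ Finset.range n, ∑ k ∈ Finset.range n, (t/τ) ^ ε * (A j k + A k j) :=
      Finset.sum_le_sum fun j _ => Finset.sum_le_sum fun k _ => hFA j k
    have h2 : ∑ j ∈ Finset.range n, ∑ k ∈ Finset.range n, (t/τ) ^ ε * (A j k + A k j)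
        = (t/τ) ^ ε * ((∑ j ∈ Finset.range n, ∑ k ∈ Finset.range n, A j k)
          + ∑ j ∈ Finset.range n, ∑ k ∈ Finset.range n, A k j) := by
      simp only [← Finset.mul_sum, Finset.sum_add_distrib]
    have h3 : ∑ j ∈ Finset.range n, ∑ k ∈ Finset.range n, A k j
        = ∑ j ∈ Finset.range n, ∑ k ∈ Finset.range n, A j k := Finset.sum_comm
    refine le_trans h1 ?_
    rw [h2, h3]
    have := hAsum
    have hpow : (0:ℝ) ≤ (t/τ) ^ ε := Real.rpow_nonneg htτpos.le _
    nlinarith [hAsum]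
  have heE : ∑ j ∈ Finset.range n, ∑ k ∈ Finset.range n, (e j + e k)
      ≤ 2 * (n:ℝ) * ((M:ℝ) * t ^ ε) := by
    have h1 : ∑ j ∈ Finset.range n, ∑ k ∈ Finset.range n, (e j + e k)
        = (n:ℝ) * (∑ j ∈ Finset.range n, e j) + (n:ℝ) * (∑ k ∈ Finset.range n, e k) := by
      simp only [Finset.sum_add_distrib, Finset.sum_const, Finset.card_range, nsmul_eq_mul,
        Finset.mul_sum]
    rw [h1]
    nlinarith [he_sum, hNpos]
  -- Combine
  set S : ℝ := ∑ j ∈ Finset.range n, ∑ k ∈ Finset.range n, f (s j, s k) with hS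
  have hSbound : S ≤ 2 * (n:ℝ) * ((M:ℝ) * t ^ ε) + (t/τ) ^ ε * (2 * ((n:ℝ) * T)) := by
    have h1 : S ≤ ∑ j ∈ Finset.range n, ∑ k ∈ Finset.range n, ((e j + e k) + F j k) := by
      rw [hS]
      exact Finset.sum_le_sum fun j _ => Finset.sum_le_sum fun k _ => key j k
    have h2 : ∑ j ∈ Finset.range n, ∑ k ∈ Finset.range n, ((e j + e k) + F j k)
        = (∑ j ∈ Finset.range n, ∑ k ∈ Finset.range n, (e j + e k))
          + ∑ j ∈ Finset.range n, ∑ k ∈ Finset.range n, F j k := by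
      simp only [Finset.sum_add_distrib]
    exact le_trans h1 (le_trans (le_of_eq h2) (add_le_add heE hFsum))
  have hTle : T ≤ 1 + (n:ℝ) ^ (1 - ε) / (1 - ε) := sum_rpow_aux ε hε hε' n
  -- Final numeric estimates
  have hNinv : (0:ℝ) < (n:ℝ)⁻¹ := by positivity
  have hpowtτ : (0:ℝ) ≤ (t/τ) ^ ε := Real.rpow_nonneg htτpos.le _
  have hNε : (0:ℝ) < (n:ℝ) ^ ε := Real.rpow_pos_of_pos hNpos ε
  have hsplitpow : (n:ℝ) ^ (1 - ε) = (n:ℝ) / (n:ℝ) ^ ε := by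
    rw [Real.rpow_sub hNpos, Real.rpow_one]
  -- bound 1 : t^ε / n ≤ 2τ
  have hb1 : t ^ ε / (n:ℝ) ≤ 2 * τ := by
    have h2τpos : (0:ℝ) < t/(2*τ) := by positivity
    have h1 : t ^ ε / (n:ℝ) ≤ t ^ ε / (t/(2*τ)) :=
      div_le_div_of_nonneg_left htε h2τpos hn_low
    have h2 : t ^ ε / (t/(2*τ)) = 2 * τ * (t ^ (ε - 1)) := by
      rw [Real.rpow_sub ht0, Real.rpow_one]
      field_simp
    have h3 : t ^ (ε - 1) ≤ 1 := Real.rpow_le_one_of_one_le_of_nonpos ht1 (by linarith)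
    calc t ^ ε / (n:ℝ) ≤ 2 * τ * (t ^ (ε - 1)) := by rw [← h2]; exact h1
      _ ≤ 2 * τ * 1 := by nlinarith
      _ = 2 * τ := by ring
  -- bound 2 : (t/τ)^ε ≤ 2n
  have hb2 : (t/τ) ^ ε ≤ 2 * (n:ℝ) := by
    calc (t/τ) ^ ε ≤ (t/τ) ^ (1:ℝ) :=
          Real.rpow_le_rpow_of_exponent_le (by linarith) hε'.le
      _ = t/τ := Real.rpow_one _
      _ ≤ 2 * (n:ℝ) := hνn
  -- bound 3 : (t/τ)^ε ≤ 2 * n^ε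
  have hb3 : (t/τ) ^ ε ≤ 2 * (n:ℝ) ^ ε := by
    calc (t/τ) ^ ε ≤ (2 * (n:ℝ)) ^ ε := Real.rpow_le_rpow htτpos.le hνn hε.le
      _ = 2 ^ ε * (n:ℝ) ^ ε := Real.mul_rpow (by norm_num) hNpos.le
      _ ≤ 2 * (n:ℝ) ^ ε := by
          have h2e : (2:ℝ) ^ ε ≤ 2 ^ (1:ℝ) :=
            Real.rpow_le_rpow_of_exponent_le one_le_two hε'.le
          rw [Real.rpow_one] at h2e
          nlinarith
  rw [heval]
  have hexp : (n:ℝ)⁻¹ * ((n:ℝ)⁻¹ * S)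
      ≤ (n:ℝ)⁻¹ * ((n:ℝ)⁻¹ * (2 * (n:ℝ) * ((M:ℝ) * t ^ ε)
        + (t/τ) ^ ε * (2 * ((n:ℝ) * (1 + (n:ℝ) ^ (1 - ε) / (1 - ε)))))) := by
    have hSb : S ≤ 2 * (n:ℝ) * ((M:ℝ) * t ^ ε)
        + (t/τ) ^ ε * (2 * ((n:ℝ) * (1 + (n:ℝ) ^ (1 - ε) / (1 - ε)))) := by
      refine le_trans hSbound ?_
      have : (t/τ) ^ ε * (2 * ((n:ℝ) * T))
          ≤ (t/τ) ^ ε * (2 * ((n:ℝ) * (1 + (n:ℝ) ^ (1 - ε) / (1 - ε)))) := by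
        apply mul_le_mul_of_nonneg_left _ hpowtτ
        have h := mul_le_mul_of_nonneg_left hTle hNpos.le
        linarith
      linarith
    exact mul_le_mul_of_nonneg_left (mul_le_mul_of_nonneg_left hSb hNinv.le) hNinv.le
  refine le_trans hexp ?_
  have hId : (n:ℝ)⁻¹ * ((n:ℝ)⁻¹ * (2 * (n:ℝ) * ((M:ℝ) * t ^ ε)
        + (t/τ) ^ ε * (2 * ((n:ℝ) * (1 + (n:ℝ) ^ (1 - ε) / (1 - ε))))))
      = 2 * (M:ℝ) * (t ^ ε / (n:ℝ)) + 2 * ((t/τ) ^ ε / (n:ℝ))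
        + 2 * (t/τ) ^ ε / ((n:ℝ) ^ ε * (1 - ε)) := by
    rw [hsplitpow]
    field_simp
    ring
  rw [hId]
  have hM1 : (1:ℝ) ≤ (M:ℝ) := by exact_mod_cast Nat.one_le_iff_ne_zero.2 (by omega)
  have hfin1 : 2 * (M:ℝ) * (t ^ ε / (n:ℝ)) ≤ 4 * (M:ℝ) * τ := by nlinarith
  have hfin2 : 2 * ((t/τ) ^ ε / (n:ℝ)) ≤ 4 := by
    have : (t/τ) ^ ε / (n:ℝ) ≤ 2 := by
      rw [div_le_iff₀ hNpos]; linarith [hb2]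
    linarith
  have hfin3 : 2 * (t/τ) ^ ε / ((n:ℝ) ^ ε * (1 - ε)) ≤ 4 / (1 - ε) := by
    rw [div_le_div_iff₀ (by positivity) h1ε]
    nlinarith [hb3, hNε]
  linarith
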